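/- arXiv:1105.2008 — 7 statements merged into one kernel-verified Lean document; each statement's English description precedes it below -/
import Mathlib

section
/- (Loday) For every binary tree t with n internal vertices, the sum of the weights ω(v) over all internal vertices v of t equals the binomial coefficient C(n+1, 2) = n(n+1)/2; equivalently, the sum of ω(v) over all internal vertices of t equals C(leaves(t), 2). -/
/-- A binary tree: either a leaf, or an internal vertex carrying an ordered
pair of binary subtrees. -/
inductive BTree where
  | leaf : BTree
  | node : BTree → BTree → BTree

namespace BTree

/-- The number of leaves of a binary tree. -/
def leaves : BTree → ℕ
  | leaf => 1
  | node l r => l.leaves + r.leaves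

/-- The number of internal vertices of a binary tree. -/
def internal : BTree → ℕ
  | leaf => 0
  | node l r => l.internal + r.internal + 1

/-- The sum, over all internal vertices `v` of the tree, of the weight
`ω(v) := leaves(l) * leaves(r)`, where `l`, `r` are the two subtrees of `v`. -/
def weightSum : BTree → ℕ
  | leaf => 0
  | node l r => l.leaves * r.leaves + l.weightSum + r.weightSum

end BTree

lemma BTree.leaves_eq (t : BTree) : t.leaves = t.internal + 1 := by
  induction t with
  | leaf => rfl
  | node l r ihl ihr => simp [BTree.leaves, BTree.internal, ihl, ihr]; ring

lemma choose_two_add (a b : ℕ) : a * b + a.choose 2 + b.choose 2 = (a + b).choose 2 := by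
  rw [Nat.add_choose_eq, Finset.Nat.sum_antidiagonal_eq_sum_range_succ_mk]
  simp [Finset.sum_range_succ, Nat.choose_one_right]
  ring

lemma BTree.weightSum_eq (t : BTree) : t.weightSum = t.leaves.choose 2 := by
  induction t with
  | leaf => rfl
  | node l r ihl ihr =>
    simp only [BTree.weightSum, BTree.leaves, ihl, ihr]
    exact choose_two_add _ _

/-- (Loday) For every binary tree `t` with `n` internal vertices, the sum of the
weights `ω(v)` over all internal vertices equals `C(n+1, 2)`; equivalently, it
equals `C(leaves t, 2)`. -/
theorem loday_weight_sum (t : BTree) :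
    t.weightSum = (t.internal + 1).choose 2 ∧ t.weightSum = t.leaves.choose 2 := by
  rw [← t.leaves_eq]
  exact ⟨t.weightSum_eq, t.weightSum_eq⟩
end

section
/- The maps d and H on the decorated-tree space V_t satisfy the contracting-homotopy identity d ∘ H + H ∘ d = id_{V_t}. (This is the tree-local form of the Lemma stating that d_ψH + Hd_ψ is zero in arity one and the identity in all other arities on the cofree cooperad.) -/
namespace BTree

/-- The weights `ω(v) = leaves(l) · leaves(r)` of the internal vertices of a
binary tree, listed according to a fixed linear order on the internal
vertices. -/
def weightList : BTree → List ℕ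
  | leaf => []
  | node l r => l.leaves * r.leaves :: (l.weightList ++ r.weightList)

theorem weightList_length (t : BTree) : t.weightList.length = t.internal := by
  induction t with
  | leaf => rfl
  | node l r hl hr => simp [weightList, internal, hl, hr]

/-- The weight `ω(vᵢ)` of the `i`-th internal vertex (in the fixed linear
order `v₁ < ⋯ < vₙ` on the internal vertices). -/
def omega (t : BTree) (v : Fin t.internal) : ℕ :=
  t.weightList.get (Fin.cast t.weightList_length.symm v)

end BTree

/-- The two possible decorations `μ` (degree 1) and `β` (degree 2) of an
internal vertex. -/
inductive Label where
  | mu : Label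
  | beta : Label
  deriving DecidableEq

/-- `V_t`: the ℚ-vector space with basis the set of labelings
`ℓ : {v₁, …, vₙ} → {μ, β}` of the internal vertices of `t`. -/
abbrev Vt (t : BTree) : Type := (Fin t.internal → Label) →₀ ℚ

/-- The Koszul sign `ε(ℓ, v) = (−1)^{#{w < v : ℓ(w) = μ}}`. -/
def koszulSign (t : BTree) (ℓ : Fin t.internal → Label) (v : Fin t.internal) : ℚ :=
  (-1 : ℚ) ^ (Finset.univ.filter fun w => w < v ∧ ℓ w = Label.mu).card

/-- The coderivation `d` on basis vectors:
`d(ℓ) := Σ_{v : ℓ(v) = μ} ε(ℓ, v) · ℓ[v ↦ β]`. -/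
noncomputable def dMap (t : BTree) : Vt t →ₗ[ℚ] Vt t :=
  Finsupp.lift (Vt t) ℚ (Fin t.internal → Label) fun ℓ =>
    ∑ v ∈ Finset.univ.filter (fun v => ℓ v = Label.mu),
      koszulSign t ℓ v • Finsupp.single (Function.update ℓ v Label.beta) (1 : ℚ)

/-- The homotopy `H` on basis vectors:
`H(ℓ) := Σ_{v : ℓ(v) = β} (ω(v) / C(n+1, 2)) · ε(ℓ, v) · ℓ[v ↦ μ]`. -/
noncomputable def hMap (t : BTree) : Vt t →ₗ[ℚ] Vt t :=
  Finsupp.lift (Vt t) ℚ (Fin t.internal → Label) fun ℓ =>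
    ∑ v ∈ Finset.univ.filter (fun v => ℓ v = Label.beta),
      ((t.omega v : ℚ) / ((t.internal + 1).choose 2 : ℚ) * koszulSign t ℓ v) •
        Finsupp.single (Function.update ℓ v Label.mu) (1 : ℚ)

/-!
Write `d = ∑ᵥ Rᵥ` and `H = ∑ᵥ cᵥ Lᵥ` with `cᵥ = ω(v) / C(n+1, 2)`, where `Rᵥ` relabels `v` from
`μ` to `β` and `Lᵥ` relabels it back, both with the Koszul sign. Like fermionic creation and
annihilation operators, `Rᵥ Lᵥ + Lᵥ Rᵥ = 1`, while `R_w` and `Lᵥ` anticommute for `w ≠ v`: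
relabelling the earlier of the two vertices changes its degree by one and so flips the Koszul
sign of the later one. Hence `dH + Hd = (∑ᵥ cᵥ) • 1`, and `∑ᵥ ω(v) = C(n+1, 2)` by induction on
the tree, since `C(a+b, 2) = C(a, 2) + C(b, 2) + ab`.
-/

open Finset Function

theorem Finset.sum_mul_sum_add_sum_mul_sum_of_anticomm {ι R : Type*}
    [NonUnitalNonAssocSemiring R] (s : Finset ι) (a b : ι → R)
    (h : ∀ v w, v ≠ w → a w * b v + b v * a w = 0) :
    (∑ w ∈ s, a w) * (∑ v ∈ s, b v) + (∑ v ∈ s, b v) * (∑ w ∈ s, a w) =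
      ∑ v ∈ s, (a v * b v + b v * a v) := by
  rw [sum_mul_sum, sum_mul_sum, sum_comm (s := s) (t := s) (f := fun w v => a w * b v),
    ← sum_add_distrib]
  refine sum_congr rfl fun v hv => ?_
  rw [← sum_add_distrib, sum_eq_single_of_mem v hv fun w _ hwv => h v w hwv.symm]

namespace Label

def sign : Label → ℚ
  | mu => -1
  | beta => 1

lemma sign_mul_self (x : Label) : x.sign * x.sign = 1 := by
  cases x <;> norm_num [sign]

lemma sign_eq_neg_of_ne {x y : Label} (h : x ≠ y) : x.sign = -y.sign := by
  cases x <;> cases y <;> first | exact absurd rfl h | norm_num [sign]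

lemma eq_or_eq_of_ne {x y : Label} (h : x ≠ y) (z : Label) : z = x ∨ z = y := by
  cases x <;> cases y <;> cases z <;> simp_all

end Label

section Koszul

variable {ι : Type*} [Fintype ι] [LinearOrder ι]

def prefixSign (ℓ : ι → Label) (v : ι) : ℚ :=
  ∏ w ∈ univ.filter (· < v), (ℓ w).sign

lemma prefixSign_mul_self (ℓ : ι → Label) (v : ι) : prefixSign ℓ v * prefixSign ℓ v = 1 := by
  rw [prefixSign, ← prod_mul_distrib]
  exact prod_eq_one fun w _ => (ℓ w).sign_mul_self

variable [DecidableEq ι]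

lemma prefixSign_update_of_not_lt (ℓ : ι → Label) {u v : ι} (h : ¬ u < v) (x : Label) :
    prefixSign (update ℓ u x) v = prefixSign ℓ v := by
  rw [prefixSign, prefixSign, ← comp_def Label.sign, comp_update,
    prod_update_of_notMem (by simpa using h)]
  rfl

lemma prefixSign_update_of_lt (ℓ : ι → Label) {u v : ι} (h : u < v) {x : Label}
    (hx : x ≠ ℓ u) : prefixSign (update ℓ u x) v = -prefixSign ℓ v := by
  have hu : u ∈ univ.filter (· < v) := by simpa using h
  rw [prefixSign, prefixSign, ← comp_def Label.sign, comp_update, prod_update_of_mem hu,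
    prod_eq_mul_prod_sdiff_singleton_of_mem hu, Label.sign_eq_neg_of_ne hx, neg_mul]
  rfl

noncomputable def relabel (x y : Label) (v : ι) : Module.End ℚ ((ι → Label) →₀ ℚ) :=
  Finsupp.lift _ ℚ _ fun ℓ =>
    if ℓ v = x then prefixSign ℓ v • Finsupp.single (update ℓ v y) 1 else 0

lemma relabel_single (x y : Label) (v : ι) (ℓ : ι → Label) :
    relabel x y v (Finsupp.single ℓ 1) =
      if ℓ v = x then prefixSign ℓ v • Finsupp.single (update ℓ v y) 1 else 0 := by
  simp only [relabel, Finsupp.lift_apply, Finsupp.sum_single_index, zero_smul, one_smul]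

lemma relabel_single_of_ne {x : Label} (y : Label) {v : ι} {ℓ : ι → Label} (h : ℓ v ≠ x) :
    relabel x y v (Finsupp.single ℓ 1) = 0 := by
  rw [relabel_single, if_neg h]

lemma relabel_relabel_single {x : Label} (y : Label) {v : ι} {ℓ : ι → Label} (h : ℓ v = x) :
    relabel y x v (relabel x y v (Finsupp.single ℓ 1)) = Finsupp.single ℓ 1 := by
  rw [relabel_single, if_pos h, map_smul, relabel_single, if_pos (update_self ..),
    update_idem, ← h, update_eq_self, prefixSign_update_of_not_lt _ (lt_irrefl v), smul_smul,
    prefixSign_mul_self, one_smul]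

lemma relabel_anticomm_self {x y : Label} (hxy : x ≠ y) (v : ι) :
    relabel x y v * relabel y x v + relabel y x v * relabel x y v = 1 := by
  refine Finsupp.basisSingleOne.ext fun ℓ => ?_
  simp only [Finsupp.coe_basisSingleOne, LinearMap.add_apply, Module.End.mul_apply,
    Module.End.one_apply]
  wlog h : ℓ v = y generalizing x y
  · rw [add_comm]
    exact this hxy.symm ((Label.eq_or_eq_of_ne hxy _).resolve_right h)
  rw [relabel_single_of_ne y (show ℓ v ≠ x by rw [h]; exact hxy.symm), map_zero, add_zero,
    relabel_relabel_single x h]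

lemma relabel_anticomm {x y x' y' : Label} (hxy : x ≠ y) (hxy' : x' ≠ y') {v w : ι}
    (hvw : v ≠ w) :
    relabel x y v * relabel x' y' w + relabel x' y' w * relabel x y v = 0 := by
  refine Finsupp.basisSingleOne.ext fun ℓ => ?_
  simp only [Finsupp.coe_basisSingleOne, LinearMap.add_apply, Module.End.mul_apply,
    LinearMap.zero_apply]
  wlog hlt : v < w generalizing x y x' y' v w
  · rw [add_comm]
    exact this hxy' hxy hvw.symm (lt_of_le_of_ne (not_lt.mp hlt) hvw.symm)
  by_cases hv : ℓ v = x
  swap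
  · rw [relabel_single_of_ne y hv, map_zero, add_zero, relabel_single]
    split_ifs
    · rw [map_smul, relabel_single_of_ne y (by rwa [update_of_ne hvw]), smul_zero]
    · rw [map_zero]
  by_cases hw : ℓ w = x'
  swap
  · rw [relabel_single_of_ne y' hw, map_zero, zero_add, relabel_single, if_pos hv, map_smul,
      relabel_single_of_ne y' (by rwa [update_of_ne hvw.symm]), smul_zero]
  rw [relabel_single, if_pos hw, map_smul, relabel_single, update_of_ne hvw, if_pos hv,
    relabel_single, if_pos hv, map_smul, relabel_single, update_of_ne hvw.symm, if_pos hw,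
    prefixSign_update_of_not_lt _ hlt.not_gt, prefixSign_update_of_lt _ hlt (hv ▸ hxy.symm),
    update_comm hvw, smul_smul, smul_smul, mul_neg, neg_smul, mul_comm, add_neg_cancel]

theorem sum_relabel_mul_add (c : ι → ℚ) :
    (∑ w, relabel .mu .beta w) * (∑ v, c v • relabel .beta .mu v) +
        (∑ v, c v • relabel .beta .mu v) * (∑ w, relabel .mu .beta w) =
      (∑ v, c v) • (1 : Module.End ℚ ((ι → Label) →₀ ℚ)) := by
  rw [sum_mul_sum_add_sum_mul_sum_of_anticomm, sum_smul]
  · refine sum_congr rfl fun v _ => ?_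
    rw [mul_smul_comm, smul_mul_assoc, ← smul_add, relabel_anticomm_self (by decide)]
  · intro v w hvw
    rw [mul_smul_comm, smul_mul_assoc, ← smul_add,
      relabel_anticomm (by decide) (by decide) hvw.symm, smul_zero]

end Koszul

theorem koszulSign_eq_prefixSign (t : BTree) : koszulSign t = prefixSign := by
  ext ℓ v
  rw [koszulSign, prefixSign, ← filter_filter, card_eq_sum_ones, ← prod_pow_eq_pow_sum,
    prod_filter]
  exact prod_congr rfl fun w _ => by cases ℓ w <;> simp [Label.sign]

namespace BTree

theorem leaves_eq_internal_add_one (t : BTree) : t.leaves = t.internal + 1 := by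
  induction t with
  | leaf => rfl
  | node l r hl hr => rw [leaves, internal, hl, hr]; ring

theorem sum_weightList (t : BTree) : t.weightList.sum = t.leaves.choose 2 := by
  induction t with
  | leaf => rfl
  | node l r hl hr =>
    apply Nat.cast_injective (R := ℚ)
    simp only [weightList, leaves, List.sum_cons, List.sum_append, hl, hr]
    push_cast [Nat.cast_choose_two]
    ring

theorem sum_omega (t : BTree) : ∑ v, t.omega v = (t.internal + 1).choose 2 := by
  rw [← leaves_eq_internal_add_one, ← sum_weightList, ← Fin.sum_univ_getElem]
  exact Fintype.sum_equiv (finCongr t.weightList_length.symm) _ _ fun v => rfl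

end BTree

theorem dMap_eq_sum_relabel (t : BTree) : dMap t = ∑ v, relabel .mu .beta v := by
  refine Finsupp.basisSingleOne.ext fun ℓ => ?_
  simp [dMap, relabel_single, koszulSign_eq_prefixSign, sum_filter]

theorem hMap_eq_sum_relabel (t : BTree) :
    hMap t = ∑ v, ((t.omega v : ℚ) / ((t.internal + 1).choose 2 : ℚ)) • relabel .beta .mu v := by
  refine Finsupp.basisSingleOne.ext fun ℓ => ?_
  simp [hMap, relabel_single, koszulSign_eq_prefixSign, sum_filter]

/-- The maps `d` and `H` on the decorated-tree space `V_t` satisfy the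
contracting-homotopy identity `d ∘ H + H ∘ d = id_{V_t}`. -/
theorem dMap_hMap_contracting_homotopy (t : BTree) (ht : 1 ≤ t.internal) :
    (dMap t).comp (hMap t) + (hMap t).comp (dMap t) = LinearMap.id := by
  have hC : (((t.internal + 1).choose 2 : ℕ) : ℚ) ≠ 0 :=
    Nat.cast_ne_zero.mpr (Nat.choose_pos (by omega)).ne'
  rw [← Module.End.mul_eq_comp, ← Module.End.mul_eq_comp, dMap_eq_sum_relabel,
    hMap_eq_sum_relabel, sum_relabel_mul_add, ← sum_div, ← Nat.cast_sum, t.sum_omega,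
    div_self hC, one_smul, Module.End.one_eq_id]
end

section
/- (Hodge decomposition direction of the dΔ-lemma, after Deligne–Griffiths–Morgan–Sullivan) If the mixed chain complex A satisfies the dΔ-condition, then there exist graded subspaces H_n ⊆ A_n and S_n ⊆ A_n such that for every n: (i) A_n is the internal direct sum H_n ⊕ S_n ⊕ d(S_{n+1}) ⊕ Δ(S_{n−1}) ⊕ (d∘Δ)(S_n); (ii) d and Δ vanish on H_n; (iii) the restrictions of d to S_n and to Δ(S_n) are injective, and the restrictions of Δ to S_n and to d(S_n) are injective. -/
/-- A mixed chain complex over `K` is a `ℤ`-graded `K`-vector space `A` with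
maps `d` of degree `−1` and `Δ` of degree `+1` such that `d ∘ d = 0`,
`Δ ∘ Δ = 0`, and `d ∘ Δ + Δ ∘ d = 0`.  Degrees are indexed so that
`d n : A (n+1) →ₗ A n` and `Δ n : A n →ₗ A (n+1)`.

The `dΔ`-condition: in every degree,
`Ker d ∩ Ker Δ ∩ (Im d + Im Δ) = Im (d ∘ Δ)`. -/
def dDeltaCondition (K : Type*) [Field K] (A : ℤ → Type*)
    [∀ n, AddCommGroup (A n)] [∀ n, Module K (A n)]
    (d : ∀ n : ℤ, A (n + 1) →ₗ[K] A n) (Δ : ∀ n : ℤ, A n →ₗ[K] A (n + 1)) : Prop :=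
  ∀ n : ℤ,
    LinearMap.ker (d n) ⊓ LinearMap.ker (Δ (n + 1)) ⊓
        (LinearMap.range (d (n + 1)) ⊔ LinearMap.range (Δ n)) =
      LinearMap.range ((d (n + 1)).comp (Δ (n + 1)))

/-- (Hodge decomposition direction of the `dΔ`-lemma, after
Deligne–Griffiths–Morgan–Sullivan.)  If the mixed chain complex `A` satisfies
the `dΔ`-condition, then there exist graded subspaces `H_n ⊆ A_n` and
`S_n ⊆ A_n` such that in every degree: (i) `A` is the internal direct sum
`H ⊕ S ⊕ d S ⊕ Δ S ⊕ dΔ S` (with the appropriate degree shifts); (ii) `d` and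
`Δ` vanish on `H`; (iii) the restrictions of `d` to `S` and to `Δ S` are
injective, and the restrictions of `Δ` to `S` and to `d S` are injective. -/
theorem dDelta_condition_gives_hodge_decomposition
    (K : Type*) [Field K] [CharZero K] (A : ℤ → Type*)
    [∀ n, AddCommGroup (A n)] [∀ n, Module K (A n)]
    (d : ∀ n : ℤ, A (n + 1) →ₗ[K] A n) (Δ : ∀ n : ℤ, A n →ₗ[K] A (n + 1))
    (hd : ∀ n : ℤ, (d n).comp (d (n + 1)) = 0)
    (hΔ : ∀ n : ℤ, (Δ (n + 1)).comp (Δ n) = 0)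
    (hdΔ : ∀ n : ℤ, (Δ n).comp (d n) + (d (n + 1)).comp (Δ (n + 1)) = 0)
    (hcond : dDeltaCondition K A d Δ) :
    ∃ H S : ∀ n : ℤ, Submodule K (A n),
      ∀ n : ℤ,
        DirectSum.IsInternal
          ![H (n + 1), S (n + 1), (S (n + 1 + 1)).map (d (n + 1)), (S n).map (Δ n),
            (S (n + 1)).map ((d (n + 1)).comp (Δ (n + 1)))] ∧
        (∀ x ∈ H (n + 1), d n x = 0) ∧
        (∀ x ∈ H (n + 1), Δ (n + 1) x = 0) ∧
        Set.InjOn (d n) (S (n + 1) : Set (A (n + 1))) ∧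
        Set.InjOn (d (n + 1)) ((S (n + 1)).map (Δ (n + 1)) : Set (A (n + 1 + 1))) ∧
        Set.InjOn (Δ (n + 1)) (S (n + 1) : Set (A (n + 1))) ∧
        Set.InjOn (Δ n) ((S (n + 1)).map (d n) : Set (A n)) := by
  classical
  -- pointwise identities
  have dd : ∀ (m : ℤ) (x : A (m + 1 + 1)), d m (d (m + 1) x) = 0 := by
    intro m x
    simpa using LinearMap.ext_iff.1 (hd m) x
  have ΔΔ : ∀ (m : ℤ) (x : A m), Δ (m + 1) (Δ m x) = 0 := by
    intro m x
    simpa using LinearMap.ext_iff.1 (hΔ m) x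
  have ac : ∀ (m : ℤ) (x : A (m + 1)), Δ m (d m x) + d (m + 1) (Δ (m + 1) x) = 0 := by
    intro m x
    simpa using LinearMap.ext_iff.1 (hdΔ m) x
  -- choose the subspaces `S`
  choose S hS using fun m : ℤ =>
    Submodule.exists_isCompl (LinearMap.ker ((d m).comp (Δ m)))
  have disjS : ∀ (m : ℤ) (x : A m), x ∈ S m → d m (Δ m x) = 0 → x = 0 := by
    intro m x hx h0
    exact (Submodule.disjoint_def.1 (hS m).disjoint) x
      (LinearMap.mem_ker.2 (by simpa using h0)) hx
  have decompS : ∀ (m : ℤ) (x : A m), ∃ w s, d m (Δ m w) = 0 ∧ s ∈ S m ∧ x = w + s := by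
    intro m x
    have hx : x ∈ LinearMap.ker ((d m).comp (Δ m)) ⊔ S m := by
      rw [(hS m).sup_eq_top]; trivial
    obtain ⟨w, hw, s, hs, hws⟩ := Submodule.mem_sup.1 hx
    exact ⟨w, s, by simpa using LinearMap.mem_ker.1 hw, hs, hws.symm⟩
  have rangeP : ∀ (m : ℤ) (x : A m), (∃ y, d m (Δ m y) = x) → ∃ s ∈ S m, d m (Δ m s) = x := by
    rintro m x ⟨y, hy⟩
    obtain ⟨w, s, hw, hs, rfl⟩ := decompS m y
    exact ⟨s, hs, by rw [← hy, map_add, map_add, hw, zero_add]⟩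
  -- consequences of the dΔ-condition
  have conseq : ∀ (m : ℤ) (x : A (m + 1)), d m x = 0 → Δ (m + 1) x = 0 →
      x ∈ LinearMap.range (d (m + 1)) ⊔ LinearMap.range (Δ m) →
      ∃ w, d (m + 1) (Δ (m + 1) w) = x := by
    intro m x h1 h2 h3
    have hx : x ∈ LinearMap.range ((d (m + 1)).comp (Δ (m + 1))) := by
      rw [← hcond m]
      exact Submodule.mem_inf.2 ⟨Submodule.mem_inf.2
        ⟨LinearMap.mem_ker.2 h1, LinearMap.mem_ker.2 h2⟩, h3⟩
    obtain ⟨w, hw⟩ := LinearMap.mem_range.1 hx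
    exact ⟨w, by simpa using hw⟩
  have conseqP : ∀ (m : ℤ) (y : A (m + 1)), Δ m (d m y) = 0 →
      ∃ w, d m (Δ m w) = d m y := by
    intro m
    obtain ⟨k, rfl⟩ : ∃ k, m = k + 1 := ⟨m - 1, by ring⟩
    intro y h1
    exact conseq k (d (k + 1) y) (dd k y) h1
      (Submodule.mem_sup_left (LinearMap.mem_range.2 ⟨y, rfl⟩))
  -- the subspace of `d`-and-`Δ`-closed elements, defined uniformly in the degree
  obtain ⟨Km, Km_mem⟩ : ∃ Km : ∀ m : ℤ, Submodule K (A m),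
      ∀ (n : ℤ) (x : A (n + 1)), x ∈ Km (n + 1) ↔ Δ (n + 1) x = 0 ∧ d n x = 0 := by
    refine ⟨fun m => LinearMap.ker (Δ m) ⊓ ⨅ (k : ℤ) (h : k + 1 = m),
      (h ▸ LinearMap.ker (d k) : Submodule K (A m)), ?_⟩
    intro n x
    constructor
    · rintro ⟨h1, h2⟩
      exact ⟨h1, (Submodule.mem_iInf _).1 ((Submodule.mem_iInf _).1 h2 n) rfl⟩
    · rintro ⟨h1, h2⟩
      refine ⟨h1, (Submodule.mem_iInf _).2 fun k => (Submodule.mem_iInf _).2 fun h => ?_⟩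
      obtain rfl : k = n := by omega
      exact h2
  -- choose the harmonic subspaces `H`
  have hHex : ∀ m : ℤ, ∃ Hm : Submodule K (A m),
      Hm ≤ Km m ∧
      Disjoint Hm (LinearMap.range ((d m).comp (Δ m)) ⊓ Km m) ∧
      Km m ≤ Hm ⊔ (LinearMap.range ((d m).comp (Δ m)) ⊓ Km m) := by
    intro m
    obtain ⟨q, hq⟩ := Submodule.exists_isCompl
      (Submodule.comap (Km m).subtype (LinearMap.range ((d m).comp (Δ m)) ⊓ Km m))
    refine ⟨Submodule.map (Km m).subtype q, Submodule.map_subtype_le _ _, ?_, ?_⟩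
    · rw [Submodule.disjoint_def]
      intro x hx hxR
      obtain ⟨y, hy, rfl⟩ := Submodule.mem_map.1 hx
      have h0 : y = 0 :=
        Submodule.disjoint_def.1 hq.disjoint y (Submodule.mem_comap.2 hxR) hy
      rw [h0]; rfl
    · intro x hx
      have hx' : (⟨x, hx⟩ : Km m) ∈
          Submodule.comap (Km m).subtype (LinearMap.range ((d m).comp (Δ m)) ⊓ Km m) ⊔ q := by
        rw [hq.sup_eq_top]; trivial
      obtain ⟨a, ha, b, hb, hab⟩ := Submodule.mem_sup.1 hx'
      refine Submodule.mem_sup.2 ⟨(b : A m), Submodule.mem_map_of_mem hb, (a : A m),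
        Submodule.mem_comap.1 ha, ?_⟩
      have h2 : (a : A m) + (b : A m) = x := by
        have := congrArg Subtype.val hab
        simpa using this
      rw [add_comm]; exact h2
  choose Hm hH1 hH2 hH3 using hHex
  refine ⟨Hm, S, fun n => ?_⟩
  -- facts about H in degree n+1
  have hHd : ∀ x ∈ Hm (n + 1), d n x = 0 := fun x hx => ((Km_mem n x).1 (hH1 (n + 1) hx)).2
  have hHΔ : ∀ x ∈ Hm (n + 1), Δ (n + 1) x = 0 := fun x hx => ((Km_mem n x).1 (hH1 (n + 1) hx)).1
  -- elements in the image of d are killed by d∘Δ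
  have hkIm : ∀ w : A (n + 1 + 1), d (n + 1) (Δ (n + 1) (d (n + 1) w)) = 0 := by
    intro w
    have h2 : Δ (n + 1) (d (n + 1) w) = -(d (n + 1 + 1) (Δ (n + 1 + 1) w)) :=
      eq_neg_of_add_eq_zero_left (ac (n + 1) w)
    rw [h2, map_neg, dd (n + 1) (Δ (n + 1 + 1) w), neg_zero]
  -- injectivity statements
  have injS_d : Set.InjOn (d n) (S (n + 1) : Set (A (n + 1))) := by
    intro a ha b hb hab
    have hmem : a - b ∈ S (n + 1) := sub_mem ha hb
    have h0 : d n (a - b) = 0 := by rw [map_sub, hab, sub_self]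
    have hP : d (n + 1) (Δ (n + 1) (a - b)) = 0 := by
      have h := ac n (a - b)
      rw [h0, map_zero, zero_add] at h
      exact h
    exact sub_eq_zero.1 (disjS (n + 1) _ hmem hP)
  have injS_Δ : Set.InjOn (Δ (n + 1)) (S (n + 1) : Set (A (n + 1))) := by
    intro a ha b hb hab
    have hmem : a - b ∈ S (n + 1) := sub_mem ha hb
    have hP : d (n + 1) (Δ (n + 1) (a - b)) = 0 := by
      rw [map_sub, hab, sub_self, map_zero]
    exact sub_eq_zero.1 (disjS (n + 1) _ hmem hP)
  have injΔS_d : Set.InjOn (d (n + 1)) ((S (n + 1)).map (Δ (n + 1)) : Set (A (n + 1 + 1))) := by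
    intro x hx y hy hxy
    obtain ⟨a, ha, rfl⟩ := Submodule.mem_map.1 hx
    obtain ⟨b, hb, rfl⟩ := Submodule.mem_map.1 hy
    have hP : d (n + 1) (Δ (n + 1) (a - b)) = 0 := by
      rw [map_sub, map_sub, hxy, sub_self]
    have : a = b := sub_eq_zero.1 (disjS (n + 1) _ (sub_mem ha hb) hP)
    rw [this]
  have injdS_Δ : Set.InjOn (Δ n) ((S (n + 1)).map (d n) : Set (A n)) := by
    intro x hx y hy hxy
    obtain ⟨a, ha, rfl⟩ := Submodule.mem_map.1 hx
    obtain ⟨b, hb, rfl⟩ := Submodule.mem_map.1 hy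
    have h0 : Δ n (d n (a - b)) = 0 := by
      rw [map_sub, map_sub, hxy, sub_self]
    have hP : d (n + 1) (Δ (n + 1) (a - b)) = 0 := by
      have h := ac n (a - b)
      rw [h0, zero_add] at h
      exact h
    have : a = b := sub_eq_zero.1 (disjS (n + 1) _ (sub_mem ha hb) hP)
    rw [this]
  -- membership criterion for the fifth piece
  have memP4_of : ∀ x : A (n + 1), d n x = 0 → Δ (n + 1) x = 0 →
      x ∈ LinearMap.range (d (n + 1)) ⊔ LinearMap.range (Δ n) →
      x ∈ (S (n + 1)).map ((d (n + 1)).comp (Δ (n + 1))) := by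
    intro x h1 h2 h3
    obtain ⟨w, hw⟩ := conseq n x h1 h2 h3
    obtain ⟨s, hs, hsx⟩ := rangeP (n + 1) x ⟨w, hw⟩
    exact Submodule.mem_map.2 ⟨s, hs, by simpa using hsx⟩
  -- the key unique-decomposition fact
  have key : ∀ x0 x1 x2 x3 x4 : A (n + 1), x0 ∈ Hm (n + 1) → x1 ∈ S (n + 1) →
      x2 ∈ (S (n + 1 + 1)).map (d (n + 1)) → x3 ∈ (S n).map (Δ n) →
      x4 ∈ (S (n + 1)).map ((d (n + 1)).comp (Δ (n + 1))) →
      x0 + x1 + x2 + x3 + x4 = 0 →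
      x0 = 0 ∧ x1 = 0 ∧ x2 = 0 ∧ x3 = 0 ∧ x4 = 0 := by
    intro x0 x1 x2 x3 x4 h0 h1 h2 h3 h4 hsum
    obtain ⟨s1, hs1, rfl⟩ := Submodule.mem_map.1 h2
    obtain ⟨s2, hs2, rfl⟩ := Submodule.mem_map.1 h3
    obtain ⟨s3, hs3, rfl⟩ := Submodule.mem_map.1 h4
    simp only [LinearMap.comp_apply] at hsum ⊢
    have k0 : d (n + 1) (Δ (n + 1) x0) = 0 := by rw [hHΔ x0 h0, map_zero]
    have k2 : d (n + 1) (Δ (n + 1) (d (n + 1) s1)) = 0 := hkIm s1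
    have k3 : d (n + 1) (Δ (n + 1) (Δ n s2)) = 0 := by rw [ΔΔ n s2, map_zero]
    have k4 : d (n + 1) (Δ (n + 1) (d (n + 1) (Δ (n + 1) s3))) = 0 := hkIm _
    have hx1 : x1 = 0 := by
      apply disjS (n + 1) x1 h1
      have h := congrArg (fun z => d (n + 1) (Δ (n + 1) z)) hsum
      simpa [map_add, k0, k2, k3, k4] using h
    rw [hx1, add_zero] at hsum
    -- apply Δ
    have e4 : Δ (n + 1) (d (n + 1) (Δ (n + 1) s3)) = 0 := by
      have h := ac (n + 1) (Δ (n + 1) s3)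
      rw [ΔΔ (n + 1) s3, map_zero, add_zero] at h
      exact h
    have hΔsum := congrArg (Δ (n + 1)) hsum
    simp only [map_add, map_zero, hHΔ x0 h0, ΔΔ n s2, e4, add_zero, zero_add] at hΔsum
    have hs1z : s1 = 0 := by
      apply disjS (n + 1 + 1) s1 hs1
      have h := ac (n + 1) s1
      rw [hΔsum, zero_add] at h
      exact h
    rw [hs1z, map_zero, add_zero] at hsum
    -- apply d
    have hdsum := congrArg (d n) hsum
    simp only [map_add, map_zero, hHd x0 h0, dd n (Δ (n + 1) s3), add_zero, zero_add] at hdsum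
    have hs2z : s2 = 0 := disjS n s2 hs2 hdsum
    rw [hs2z, map_zero, add_zero] at hsum
    -- now x0 + d(Δ s3) = 0
    have hx4R : d (n + 1) (Δ (n + 1) s3) ∈
        LinearMap.range ((d (n + 1)).comp (Δ (n + 1))) ⊓ Km (n + 1) :=
      Submodule.mem_inf.2 ⟨LinearMap.mem_range.2 ⟨s3, rfl⟩,
        (Km_mem n _).2 ⟨e4, dd n (Δ (n + 1) s3)⟩⟩
    have hx0 : x0 = 0 := by
      apply Submodule.disjoint_def.1 (hH2 (n + 1)) x0 h0
      have : x0 = -(d (n + 1) (Δ (n + 1) s3)) := eq_neg_of_add_eq_zero_left hsum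
      rw [this]
      exact neg_mem hx4R
    rw [hx0, zero_add] at hsum
    exact ⟨hx0, hx1, by rw [hs1z, map_zero], by rw [hs2z, map_zero], hsum⟩
  -- the spanning fact
  have span : ∀ x : A (n + 1), ∃ x0 x1 x2 x3 x4 : A (n + 1),
      x0 ∈ Hm (n + 1) ∧ x1 ∈ S (n + 1) ∧ x2 ∈ (S (n + 1 + 1)).map (d (n + 1)) ∧
      x3 ∈ (S n).map (Δ n) ∧ x4 ∈ (S (n + 1)).map ((d (n + 1)).comp (Δ (n + 1))) ∧
      x = x0 + x1 + x2 + x3 + x4 := by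
    intro x
    obtain ⟨w, s, hw, hs, rfl⟩ := decompS (n + 1) x
    obtain ⟨u, hu⟩ := conseq (n + 1) (Δ (n + 1) w) hw (ΔΔ (n + 1) w)
      (Submodule.mem_sup_right (LinearMap.mem_range.2 ⟨w, rfl⟩))
    have hyΔ : Δ (n + 1) (w + d (n + 1) u) = 0 := by
      have h := ac (n + 1) u
      rw [hu] at h
      rw [map_add]
      exact (add_comm _ _).trans h
    have hyd : Δ n (d n (w + d (n + 1) u)) = 0 := by
      have h := ac n (w + d (n + 1) u)
      rw [hyΔ, map_zero, add_zero] at h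
      exact h
    obtain ⟨v, hv⟩ := conseqP n (w + d (n + 1) u) hyd
    have hzd : d n (w + d (n + 1) u - Δ n v) = 0 := by rw [map_sub, hv, sub_self]
    have hzΔ : Δ (n + 1) (w + d (n + 1) u - Δ n v) = 0 := by
      rw [map_sub, hyΔ, ΔΔ n v, sub_zero]
    have hzK : w + d (n + 1) u - Δ n v ∈ Km (n + 1) := (Km_mem n _).2 ⟨hzΔ, hzd⟩
    obtain ⟨h0, hh0, r, hr, hzsum⟩ := Submodule.mem_sup.1 (hH3 (n + 1) hzK)
    have hrP4 : r ∈ (S (n + 1)).map ((d (n + 1)).comp (Δ (n + 1))) := by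
      obtain ⟨t, ht⟩ := LinearMap.mem_range.1 (Submodule.mem_inf.1 hr).1
      obtain ⟨s', hs', hsr⟩ := rangeP (n + 1) r ⟨t, by simpa using ht⟩
      exact Submodule.mem_map.2 ⟨s', hs', by simpa using hsr⟩
    obtain ⟨k1, s1, hk1, hs1, hu'⟩ := decompS (n + 1 + 1) u
    obtain ⟨k2, s2, hk2, hs2, hv'⟩ := decompS n v
    have hk1P4 : d (n + 1) k1 ∈ (S (n + 1)).map ((d (n + 1)).comp (Δ (n + 1))) := by
      refine memP4_of _ (dd n k1) ?_ (Submodule.mem_sup_left (LinearMap.mem_range.2 ⟨k1, rfl⟩))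
      have h := ac (n + 1) k1
      rw [hk1, add_zero] at h
      exact h
    have hk2P4 : Δ n k2 ∈ (S (n + 1)).map ((d (n + 1)).comp (Δ (n + 1))) := by
      exact memP4_of _ hk2 (ΔΔ n k2)
        (Submodule.mem_sup_right (LinearMap.mem_range.2 ⟨k2, rfl⟩))
    refine ⟨h0, s, -(d (n + 1) s1), Δ n s2, r + Δ n k2 - d (n + 1) k1, hh0, hs,
      neg_mem (Submodule.mem_map_of_mem hs1), Submodule.mem_map_of_mem hs2,
      sub_mem (add_mem hrP4 hk2P4) hk1P4, ?_⟩
    have hw' : w = h0 + r + Δ n k2 + Δ n s2 - d (n + 1) k1 - d (n + 1) s1 := by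
      have h1 : w = (w + d (n + 1) u - Δ n v) + Δ n v - d (n + 1) u := by abel
      rw [h1, ← hzsum, hv', hu', map_add, map_add]
      abel
    rw [hw']
    abel
  constructor
  · -- the internal direct sum
    rw [DirectSum.isInternal_submodule_iff_iSupIndep_and_iSup_eq_top]
    constructor
    · rw [iSupIndep_def]
      intro i
      rw [Submodule.disjoint_def]
      intro x hxi hxsup
      obtain ⟨f, hf, hfx⟩ := (Submodule.mem_iSup_iff_exists_finsupp _ _).1 hxsup
      have hsum : ∑ j, f j = x := by
        rw [← hfx]
        exact (Finsupp.sum_fintype f (fun _ m => m) (fun _ => rfl)).symm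
      have hfi : f i = 0 := by
        have h := hf i
        rw [iSup_neg (by simp)] at h
        simpa using h
      have hfj : ∀ j, f j ∈ (![Hm (n + 1), S (n + 1), (S (n + 1 + 1)).map (d (n + 1)),
          (S n).map (Δ n), (S (n + 1)).map ((d (n + 1)).comp (Δ (n + 1)))]) j := by
        intro j
        have h := hf j
        rcases eq_or_ne j i with rfl | hij
        · rw [iSup_neg (by simp)] at h
          rw [Submodule.mem_bot] at h
          rw [h]
          exact zero_mem _
        · rwa [iSup_pos hij] at h
      set g : Fin 5 → A (n + 1) := fun j => f j - (if j = i then x else 0) with hg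
      have hgmem : ∀ j, g j ∈ (![Hm (n + 1), S (n + 1), (S (n + 1 + 1)).map (d (n + 1)),
          (S n).map (Δ n), (S (n + 1)).map ((d (n + 1)).comp (Δ (n + 1)))]) j := by
        intro j
        by_cases hij : j = i
        · subst hij
          simpa [hg, hfi] using neg_mem hxi
        · simpa [hg, hij] using hfj j
      have hgsum : g 0 + g 1 + g 2 + g 3 + g 4 = 0 := by
        rw [← Fin.sum_univ_five g]
        simp only [hg]
        rw [Finset.sum_sub_distrib, hsum, Finset.sum_ite_eq' Finset.univ i (fun _ => x)]
        simp
      have hgz := key (g 0) (g 1) (g 2) (g 3) (g 4)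
        (hgmem 0) (hgmem 1) (hgmem 2) (hgmem 3) (hgmem 4) hgsum
      have hgi : g i = 0 := by
        fin_cases i <;> tauto
      have : (0 : A (n + 1)) - x = 0 := by
        rw [← hfi] at hgi ⊢
        simpa [hg] using hgi
      simpa using this
    · rw [eq_top_iff]
      rintro x -
      obtain ⟨x0, x1, x2, x3, x4, h0, h1, h2, h3, h4, rfl⟩ := span x
      exact Submodule.add_mem _ (Submodule.add_mem _ (Submodule.add_mem _
        (Submodule.add_mem _ (Submodule.mem_iSup_of_mem (0 : Fin 5) h0)
          (Submodule.mem_iSup_of_mem (1 : Fin 5) h1))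
        (Submodule.mem_iSup_of_mem (2 : Fin 5) h2))
        (Submodule.mem_iSup_of_mem (3 : Fin 5) h3))
        (Submodule.mem_iSup_of_mem (4 : Fin 5) h4)
  · exact ⟨hHd, hHΔ, injS_d, injΔS_d, injS_Δ, injdS_Δ⟩
end

section
/- (Converse direction of the dΔ-lemma) Suppose the mixed chain complex A admits graded subspaces H_n ⊆ A_n and S_n ⊆ A_n such that for every n: (i) A_n is the internal direct sum H_n ⊕ S_n ⊕ d(S_{n+1}) ⊕ Δ(S_{n−1}) ⊕ (d∘Δ)(S_n); (ii) d and Δ vanish on H_n; (iii) the restrictions of d to S_n and to Δ(S_n) are injective, and the restrictions of Δ to S_n and to d(S_n) are injective. Then A satisfies the dΔ-condition. -/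
section helpers
variable {K M : Type*} [Field K] [AddCommGroup M] [Module K M]

lemma fin5_exists_sum (f : Fin 5 → Submodule K M) (hf : (⨆ i, f i) = ⊤) (x : M) :
    ∃ a0 ∈ f 0, ∃ a1 ∈ f 1, ∃ a2 ∈ f 2, ∃ a3 ∈ f 3, ∃ a4 ∈ f 4,
      x = a0 + a1 + a2 + a3 + a4 := by
  have hx : x ∈ (⨆ i, f i) := hf ▸ Submodule.mem_top
  have hsup : (⨆ i, f i) ≤ f 0 ⊔ f 1 ⊔ f 2 ⊔ f 3 ⊔ f 4 := by
    refine iSup_le fun i => ?_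
    fin_cases i
    · exact le_sup_of_le_left (le_sup_of_le_left (le_sup_of_le_left le_sup_left))
    · exact le_sup_of_le_left (le_sup_of_le_left (le_sup_of_le_left le_sup_right))
    · exact le_sup_of_le_left (le_sup_of_le_left le_sup_right)
    · exact le_sup_of_le_left le_sup_right
    · exact le_sup_right
  obtain ⟨y3, hy3, a4, ha4, rfl⟩ := Submodule.mem_sup.mp (hsup hx)
  obtain ⟨y2, hy2, a3, ha3, rfl⟩ := Submodule.mem_sup.mp hy3
  obtain ⟨y1, hy1, a2, ha2, rfl⟩ := Submodule.mem_sup.mp hy2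
  obtain ⟨a0, ha0, a1, ha1, rfl⟩ := Submodule.mem_sup.mp hy1
  exact ⟨a0, ha0, a1, ha1, a2, ha2, a3, ha3, a4, ha4, rfl⟩

lemma indep_pair_zero {f : Fin 5 → Submodule K M} (hf : iSupIndep f) {i j : Fin 5} (hij : i ≠ j)
    {a b : M} (ha : a ∈ f i) (hb : b ∈ f j) (hab : a + b = 0) : a = 0 ∧ b = 0 := by
  have hd : Disjoint (f i) (f j) := hf.pairwiseDisjoint hij
  have ha' : a ∈ f j := by
    have : a = -b := eq_neg_of_add_eq_zero_left hab
    exact this ▸ neg_mem hb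
  have h0 : a = 0 := Submodule.disjoint_def.mp hd a ha ha'
  exact ⟨h0, by rwa [h0, zero_add] at hab⟩

lemma indep_h0 {f : Fin 5 → Submodule K M} (hf : iSupIndep f)
    {a : M} (ha : a ∈ f 0) (ha' : a ∈ f 2 ⊔ f 3 ⊔ f 4) : a = 0 := by
  have hle : f 2 ⊔ f 3 ⊔ f 4 ≤ ⨆ j, ⨆ (_ : j ≠ 0), f j := by
    refine sup_le (sup_le ?_ ?_) ?_ <;> exact le_iSup₂_of_le _ (by decide) le_rfl
  exact Submodule.disjoint_def.mp (hf 0) a ha (hle ha')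

end helpers



/-- (Converse direction of the `dΔ`-lemma.)  Suppose the mixed chain complex
`A` admits graded subspaces `H_n ⊆ A_n` and `S_n ⊆ A_n` such that in every
degree: (i) `A` is the internal direct sum `H ⊕ S ⊕ d S ⊕ Δ S ⊕ dΔ S` (with
the appropriate degree shifts); (ii) `d` and `Δ` vanish on `H`; (iii) the
restrictions of `d` to `S` and to `Δ S` are injective, and the restrictions of
`Δ` to `S` and to `d S` are injective.  Then `A` satisfies the
`dΔ`-condition. -/
theorem hodge_decomposition_gives_dDelta_condition
    (K : Type*) [Field K] [CharZero K] (A : ℤ → Type*)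
    [∀ n, AddCommGroup (A n)] [∀ n, Module K (A n)]
    (d : ∀ n : ℤ, A (n + 1) →ₗ[K] A n) (Δ : ∀ n : ℤ, A n →ₗ[K] A (n + 1))
    (hd : ∀ n : ℤ, (d n).comp (d (n + 1)) = 0)
    (hΔ : ∀ n : ℤ, (Δ (n + 1)).comp (Δ n) = 0)
    (hdΔ : ∀ n : ℤ, (Δ n).comp (d n) + (d (n + 1)).comp (Δ (n + 1)) = 0)
    (H S : ∀ n : ℤ, Submodule K (A n))
    (hdecomp : ∀ n : ℤ,
      DirectSum.IsInternal
        ![H (n + 1), S (n + 1), (S (n + 1 + 1)).map (d (n + 1)), (S n).map (Δ n),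
          (S (n + 1)).map ((d (n + 1)).comp (Δ (n + 1)))])
    (hHd : ∀ n : ℤ, ∀ x ∈ H (n + 1), d n x = 0)
    (hHΔ : ∀ n : ℤ, ∀ x ∈ H (n + 1), Δ (n + 1) x = 0)
    (hdS : ∀ n : ℤ, Set.InjOn (d n) (S (n + 1) : Set (A (n + 1))))
    (hdΔS : ∀ n : ℤ, Set.InjOn (d (n + 1)) ((S (n + 1)).map (Δ (n + 1)) : Set (A (n + 1 + 1))))
    (hΔS : ∀ n : ℤ, Set.InjOn (Δ (n + 1)) (S (n + 1) : Set (A (n + 1))))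
    (hΔdS : ∀ n : ℤ, Set.InjOn (Δ n) ((S (n + 1)).map (d n) : Set (A n))) :
    dDeltaCondition K A d Δ := by
  have dd : ∀ (k : ℤ) (y : A (k + 1 + 1)), d k (d (k + 1) y) = 0 := fun k y => by
    simpa using DFunLike.congr_fun (hd k) y
  have ΔΔ0 : ∀ (k : ℤ) (y : A k), Δ (k + 1) (Δ k y) = 0 := fun k y => by
    simpa using DFunLike.congr_fun (hΔ k) y
  have sgn : ∀ (k : ℤ) (y : A (k + 1)), Δ k (d k y) = - d (k + 1) (Δ (k + 1) y) := fun k y => by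
    have := DFunLike.congr_fun (hdΔ k) y
    simp only [LinearMap.add_apply, LinearMap.comp_apply, LinearMap.zero_apply] at this
    exact eq_neg_of_add_eq_zero_left this
  intro n
  obtain ⟨m, rfl⟩ : ∃ m, n = m + 1 := ⟨n - 1, by ring⟩
  apply le_antisymm
  · intro x hx
    simp only [Submodule.mem_inf, LinearMap.mem_ker] at hx
    obtain ⟨⟨hxd, hxΔ⟩, hxim⟩ := hx
    obtain ⟨h0, hh0, s, hs, a2, ha2, a3, ha3, a4, ha4, hxsum⟩ :=
      fin5_exists_sum _ (hdecomp (m + 1)).submodule_iSup_eq_top x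
    simp only [Matrix.cons_val_zero, Matrix.cons_val_one, Matrix.head_cons, Matrix.cons_val_two,
      Matrix.tail_cons, Matrix.cons_val_three, Matrix.cons_val_four, Matrix.head_fin_const]
      at hh0 hs ha2 ha3 ha4
    obtain ⟨s', hs', rfl⟩ := Submodule.mem_map.mp ha2
    obtain ⟨s'', hs'', rfl⟩ := Submodule.mem_map.mp ha3
    obtain ⟨t, ht, rfl⟩ := Submodule.mem_map.mp ha4
    -- Step A : from Δ x = 0 deduce s = 0 and d s' = 0
    have e1 : Δ (m + 1 + 1) x
        = Δ (m + 1 + 1) s + -(d (m + 1 + 1 + 1) (Δ (m + 1 + 1 + 1) s')) := by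
      rw [hxsum]
      simp only [map_add, LinearMap.comp_apply]
      rw [hHΔ (m + 1) h0 hh0, ΔΔ0 (m + 1) s'', sgn (m + 1 + 1) s',
        sgn (m + 1 + 1) (Δ (m + 1 + 1) t), ΔΔ0 (m + 1 + 1) t, map_zero, neg_zero]
      abel
    have key1 : Δ (m + 1 + 1) s + -(d (m + 1 + 1 + 1) (Δ (m + 1 + 1 + 1) s')) = 0 := by
      rw [← e1]; exact hxΔ
    obtain ⟨hΔs, hneg⟩ := indep_pair_zero (hdecomp (m + 1 + 1)).submodule_iSupIndep
      (show (3 : Fin 5) ≠ 4 by decide) (Submodule.mem_map_of_mem hs)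
      (neg_mem (Submodule.mem_map_of_mem hs')) key1
    have hs0 : s = 0 := hΔS (m + 1) hs (zero_mem _) (by rw [hΔs, map_zero])
    have hds' : d (m + 1 + 1) s' = 0 := by
      refine hΔdS (m + 1 + 1) (Submodule.mem_map_of_mem hs') (zero_mem _) ?_
      rw [map_zero, sgn (m + 1 + 1) s']
      exact hneg
    -- Step B : from d x = 0 deduce Δ s'' = 0
    have e2 : d (m + 1) x = d (m + 1) (Δ (m + 1) s'') := by
      rw [hxsum, hs0, hds']
      simp only [map_add, LinearMap.comp_apply, map_zero]
      rw [hHd (m + 1) h0 hh0, dd (m + 1) (Δ (m + 1 + 1) t)]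
      abel
    have hΔs'' : Δ (m + 1) s'' = 0 := by
      refine hdΔS m (Submodule.mem_map_of_mem hs'') (zero_mem _) ?_
      rw [map_zero, ← e2]; exact hxd
    -- So x = h0 + dΔ t
    have hx4 : x = h0 + d (m + 1 + 1) (Δ (m + 1 + 1) t) := by
      rw [hxsum, hs0, hds', hΔs'']
      simp only [LinearMap.comp_apply, map_zero, add_zero, zero_add]
    -- Step C : images of d and Δ land in components 2 ⊔ 3 ⊔ 4
    have himd : ∀ y : A (m + 1 + 1 + 1), d (m + 1 + 1) y ∈
        (S (m + 1 + 1 + 1)).map (d (m + 1 + 1)) ⊔ (S (m + 1)).map (Δ (m + 1)) ⊔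
          (S (m + 1 + 1)).map ((d (m + 1 + 1)).comp (Δ (m + 1 + 1))) := by
      intro y
      obtain ⟨b0, hb0, b1, hb1, b2, hb2, b3, hb3, b4, hb4, hysum⟩ :=
        fin5_exists_sum _ (hdecomp (m + 1 + 1)).submodule_iSup_eq_top y
      simp only [Matrix.cons_val_zero, Matrix.cons_val_one, Matrix.head_cons, Matrix.cons_val_two,
        Matrix.tail_cons, Matrix.cons_val_three, Matrix.cons_val_four, Matrix.head_fin_const]
        at hb0 hb1 hb2 hb3 hb4
      obtain ⟨u, hu, rfl⟩ := Submodule.mem_map.mp hb2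
      obtain ⟨v, hv, rfl⟩ := Submodule.mem_map.mp hb3
      obtain ⟨w, hw, rfl⟩ := Submodule.mem_map.mp hb4
      rw [hysum]
      simp only [map_add, LinearMap.comp_apply]
      rw [hHd (m + 1 + 1) b0 hb0, dd (m + 1 + 1) u, dd (m + 1 + 1) (Δ (m + 1 + 1 + 1) w)]
      simp only [zero_add, add_zero]
      refine add_mem ?_ ?_
      · exact Submodule.mem_sup_left (Submodule.mem_sup_left (Submodule.mem_map_of_mem hb1))
      · exact Submodule.mem_sup_right ⟨v, hv, rfl⟩
    have himΔ : ∀ z : A (m + 1), Δ (m + 1) z ∈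
        (S (m + 1 + 1 + 1)).map (d (m + 1 + 1)) ⊔ (S (m + 1)).map (Δ (m + 1)) ⊔
          (S (m + 1 + 1)).map ((d (m + 1 + 1)).comp (Δ (m + 1 + 1))) := by
      intro z
      obtain ⟨b0, hb0, b1, hb1, b2, hb2, b3, hb3, b4, hb4, hzsum⟩ :=
        fin5_exists_sum _ (hdecomp m).submodule_iSup_eq_top z
      simp only [Matrix.cons_val_zero, Matrix.cons_val_one, Matrix.head_cons, Matrix.cons_val_two,
        Matrix.tail_cons, Matrix.cons_val_three, Matrix.cons_val_four, Matrix.head_fin_const]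
        at hb0 hb1 hb2 hb3 hb4
      obtain ⟨u, hu, rfl⟩ := Submodule.mem_map.mp hb2
      obtain ⟨v, hv, rfl⟩ := Submodule.mem_map.mp hb3
      obtain ⟨w, hw, rfl⟩ := Submodule.mem_map.mp hb4
      rw [hzsum]
      simp only [map_add, LinearMap.comp_apply]
      rw [hHΔ m b0 hb0, ΔΔ0 m v, sgn (m + 1) u, sgn (m + 1) (Δ (m + 1) w), ΔΔ0 (m + 1) w,
        map_zero, neg_zero]
      simp only [zero_add, add_zero]
      refine add_mem ?_ ?_
      · exact Submodule.mem_sup_left (Submodule.mem_sup_right (Submodule.mem_map_of_mem hb1))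
      · exact Submodule.mem_sup_right (neg_mem ⟨u, hu, rfl⟩)
    -- Step D : h0 = 0
    have hh_mem : h0 ∈
        (S (m + 1 + 1 + 1)).map (d (m + 1 + 1)) ⊔ (S (m + 1)).map (Δ (m + 1)) ⊔
          (S (m + 1 + 1)).map ((d (m + 1 + 1)).comp (Δ (m + 1 + 1))) := by
      have hh0eq : h0 = x - d (m + 1 + 1) (Δ (m + 1 + 1) t) := by rw [hx4]; abel
      rw [hh0eq]
      refine sub_mem ?_ ?_
      · obtain ⟨p, hp, q, hq, hpq⟩ := Submodule.mem_sup.mp hxim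
        obtain ⟨y, rfl⟩ := hp
        obtain ⟨z, rfl⟩ := hq
        rw [← hpq]
        exact add_mem (himd y) (himΔ z)
      · exact Submodule.mem_sup_right ⟨t, ht, rfl⟩
    have hh0z : h0 = 0 := indep_h0 (hdecomp (m + 1)).submodule_iSupIndep hh0 hh_mem
    exact ⟨t, by rw [hx4, hh0z, zero_add, LinearMap.comp_apply]⟩
  · rintro x ⟨y, rfl⟩
    refine Submodule.mem_inf.mpr ⟨Submodule.mem_inf.mpr ⟨?_, ?_⟩, ?_⟩
    · simp only [LinearMap.mem_ker, LinearMap.comp_apply]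
      exact dd (m + 1) (Δ (m + 1 + 1) y)
    · simp only [LinearMap.mem_ker, LinearMap.comp_apply]
      rw [sgn (m + 1 + 1) (Δ (m + 1 + 1) y)]
      rw [ΔΔ0 (m + 1 + 1) y, map_zero, neg_zero]
    · exact Submodule.mem_sup_left ⟨Δ (m + 1 + 1) y, rfl⟩
end

section
/- (First arrow of the formality zig-zag) Let A be a mixed chain complex satisfying the dΔ-condition. Then d restricts to Ker Δ (i.e. d(Ker Δ_n) ⊆ Ker Δ_{n−1}), and the inclusion of complexes (Ker Δ, d) ↪ (A, d) is a quasi-isomorphism: for every n, the natural map (Ker Δ_n ∩ Ker d_n) / d(Ker Δ_{n+1}) → Ker d_n / d(A_{n+1}) induced by the inclusion is a linear isomorphism. -/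
/-- (First arrow of the formality zig-zag.)  Let `A` be a mixed chain complex
satisfying the `dΔ`-condition.  Then `d` restricts to `Ker Δ`, and the
inclusion of complexes `(Ker Δ, d) ↪ (A, d)` is a quasi-isomorphism: in every
degree, the natural map
`(Ker Δ ∩ Ker d) / d(Ker Δ) → Ker d / Im d`
induced by the inclusion is a linear isomorphism. -/
theorem kerDelta_inclusion_quasiIso
    (K : Type*) [Field K] [CharZero K] (A : ℤ → Type*)
    [∀ n, AddCommGroup (A n)] [∀ n, Module K (A n)]
    (d : ∀ n : ℤ, A (n + 1) →ₗ[K] A n) (Δ : ∀ n : ℤ, A n →ₗ[K] A (n + 1))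
    (hd : ∀ n : ℤ, (d n).comp (d (n + 1)) = 0)
    (hΔ : ∀ n : ℤ, (Δ (n + 1)).comp (Δ n) = 0)
    (hdΔ : ∀ n : ℤ, (Δ n).comp (d n) + (d (n + 1)).comp (Δ (n + 1)) = 0)
    (hcond : dDeltaCondition K A d Δ) :
    (∀ n : ℤ, ∀ x : A (n + 1), Δ (n + 1) x = 0 → Δ n (d n x) = 0) ∧
    (∀ n : ℤ,
      ∃ f : (↥(LinearMap.ker (Δ (n + 1)) ⊓ LinearMap.ker (d n)) ⧸
              Submodule.comap (LinearMap.ker (Δ (n + 1)) ⊓ LinearMap.ker (d n)).subtype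
                ((LinearMap.ker (Δ (n + 1 + 1))).map (d (n + 1)))) →ₗ[K]
            (↥(LinearMap.ker (d n)) ⧸
              Submodule.comap (LinearMap.ker (d n)).subtype
                (LinearMap.range (d (n + 1)))),
        (∀ x : ↥(LinearMap.ker (Δ (n + 1)) ⊓ LinearMap.ker (d n)),
          f (Submodule.Quotient.mk x) =
            Submodule.Quotient.mk (Submodule.inclusion inf_le_right x)) ∧
        Function.Bijective f) := by

  have key : ∀ n : ℤ, ∀ x : A (n + 1), Δ n (d n x) + d (n + 1) (Δ (n + 1) x) = 0 := by
    intro n x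
    have := LinearMap.congr_fun (hdΔ n) x
    simpa using this
  constructor
  · intro n x hx
    have h := key n x
    rw [hx] at h
    simpa using h
  · intro n
    set S := LinearMap.ker (Δ (n + 1)) ⊓ LinearMap.ker (d n) with hS
    set N := Submodule.comap S.subtype
      ((LinearMap.ker (Δ (n + 1 + 1))).map (d (n + 1))) with hNdef
    set T := Submodule.comap (LinearMap.ker (d n)).subtype
      (LinearMap.range (d (n + 1))) with hTdef
    set g : S →ₗ[K] (↥(LinearMap.ker (d n)) ⧸ T) :=
      T.mkQ.comp (Submodule.inclusion (inf_le_right : S ≤ LinearMap.ker (d n))) with hg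
    have hN : N ≤ LinearMap.ker g := by
      rintro ⟨x, hxS⟩ hx
      obtain ⟨y, hy, hyx⟩ := hx
      simp only [hg, LinearMap.mem_ker, LinearMap.comp_apply, Submodule.mkQ_apply,
        Submodule.Quotient.mk_eq_zero]
      exact ⟨y, hyx⟩
    refine ⟨Submodule.liftQ N g hN, fun x => rfl, ?_, ?_⟩
    · -- injective
      intro a b hab
      obtain ⟨x, rfl⟩ := Submodule.Quotient.mk_surjective _ a
      obtain ⟨y, rfl⟩ := Submodule.Quotient.mk_surjective _ b
      rw [Submodule.Quotient.eq]
      have hxy : g (x - y) = 0 := by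
        simp only [Submodule.liftQ_apply] at hab
        rw [map_sub, hab, sub_self]
      have hmem : ((x - y : S) : A (n + 1)) ∈ LinearMap.range (d (n + 1)) := by
        simp only [hg, LinearMap.comp_apply, Submodule.mkQ_apply,
          Submodule.Quotient.mk_eq_zero] at hxy
        exact hxy
      have hxyS : ((x - y : S) : A (n + 1)) ∈ S := (x - y).2
      have hLHS : ((x - y : S) : A (n + 1)) ∈
          LinearMap.ker (d n) ⊓ LinearMap.ker (Δ (n + 1)) ⊓
            (LinearMap.range (d (n + 1)) ⊔ LinearMap.range (Δ n)) :=
        ⟨⟨hxyS.2, hxyS.1⟩, Submodule.mem_sup_left hmem⟩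
      rw [hcond n] at hLHS
      obtain ⟨z, hz⟩ := hLHS
      refine ⟨Δ (n + 1) z, ?_, hz⟩
      exact LinearMap.congr_fun (hΔ (n + 1)) z
    · -- surjective
      intro q
      obtain ⟨x, rfl⟩ := Submodule.Quotient.mk_surjective _ q
      have hdx : d n (x : A (n + 1)) = 0 := x.2
      have h1 : d (n + 1) (Δ (n + 1) (x : A (n + 1))) = 0 := by
        have := key n (x : A (n + 1))
        rw [hdx, map_zero, zero_add] at this
        exact this
      have h2 : Δ (n + 1 + 1) (Δ (n + 1) (x : A (n + 1))) = 0 :=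
        LinearMap.congr_fun (hΔ (n + 1)) (x : A (n + 1))
      have hLHS : Δ (n + 1) (x : A (n + 1)) ∈
          LinearMap.ker (d (n + 1)) ⊓ LinearMap.ker (Δ (n + 1 + 1)) ⊓
            (LinearMap.range (d (n + 1 + 1)) ⊔ LinearMap.range (Δ (n + 1))) :=
        ⟨⟨h1, h2⟩, Submodule.mem_sup_right ⟨(x : A (n + 1)), rfl⟩⟩
      rw [hcond (n + 1)] at hLHS
      obtain ⟨w, hw⟩ := hLHS
      set x' : A (n + 1) := (x : A (n + 1)) + d (n + 1) w with hx'
      have hdx' : d n x' = 0 := by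
        rw [hx', map_add, hdx, zero_add]
        exact LinearMap.congr_fun (hd n) w
      have hΔx' : Δ (n + 1) x' = 0 := by
        rw [hx', map_add]
        have hk := key (n + 1) w
        simp only [LinearMap.comp_apply] at hw
        rw [hw] at hk
        exact (add_comm _ _).trans hk
      refine ⟨Submodule.Quotient.mk (⟨x', hΔx', hdx'⟩ : S), ?_⟩
      rw [Submodule.liftQ_apply]
      show Submodule.Quotient.mk (Submodule.inclusion _ _) = _
      rw [Submodule.Quotient.eq]
      refine ⟨w, ?_⟩
      show d (n + 1) w = ((Submodule.inclusion _ (⟨x', hΔx', hdx'⟩ : S) - x : LinearMap.ker (d n)) : A (n + 1))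
      simp only [AddSubgroupClass.coe_sub, Submodule.coe_inclusion, hx']
      abel
end

section
/- (Second arrow of the formality zig-zag) Let A be a mixed chain complex satisfying the dΔ-condition. Then d(Ker Δ_{n+1}) ⊆ Δ(A_{n−1}) ∩ Ker Δ_n for every n, so the quotient map Ker Δ → Ker Δ / Im Δ is a chain map from (Ker Δ, d) to (Ker Δ / Im Δ, 0); moreover it is a quasi-isomorphism: for every n, the induced map (Ker Δ_n ∩ Ker d_n) / d(Ker Δ_{n+1}) → Ker Δ_n / Δ(A_{n−1}) is a linear isomorphism. -/
open LinearMap Submodule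

namespace Submodule

variable {R M N : Type*} [Ring R] [AddCommGroup M] [Module R M] [AddCommGroup N] [Module R N]

theorem liftQ_bijective (p : Submodule R M) (f : M →ₗ[R] N) (hp : p = ker f)
    (hf : Function.Surjective f) : Function.Bijective (p.liftQ f hp.le) :=
  ⟨ker_eq_bot.mp (ker_liftQ_eq_bot' p f hp), by
    rw [← range_eq_top, range_liftQ, range_eq_top.mpr hf]⟩

theorem ker_mkQ_comp_inclusion {S T : Submodule R M} (h : S ≤ T) (P : Submodule R M) :
    ker ((P.comap T.subtype).mkQ ∘ₗ inclusion h) = P.comap S.subtype := by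
  ext x
  simp only [mem_ker, coe_comp, Function.comp_apply, mkQ_apply, Quotient.mk_eq_zero,
    mem_comap, subtype_apply, coe_inclusion]

end Submodule

namespace MixedComplex

variable {K : Type*} [Field K] {A : ℤ → Type*} [∀ n, AddCommGroup (A n)] [∀ n, Module K (A n)]
  {d : ∀ n : ℤ, A (n + 1) →ₗ[K] A n} {Δ : ∀ n : ℤ, A n →ₗ[K] A (n + 1)}

theorem d_d_apply (hd : ∀ n : ℤ, (d n).comp (d (n + 1)) = 0) {n : ℤ} (x : A (n + 1 + 1)) :
    d n (d (n + 1) x) = 0 :=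
  LinearMap.congr_fun (hd n) x

theorem Delta_Delta_apply (hΔ : ∀ n : ℤ, (Δ (n + 1)).comp (Δ n) = 0) {n : ℤ} (x : A n) :
    Δ (n + 1) (Δ n x) = 0 :=
  LinearMap.congr_fun (hΔ n) x

theorem Delta_d_apply (hdΔ : ∀ n : ℤ, (Δ n).comp (d n) + (d (n + 1)).comp (Δ (n + 1)) = 0)
    {n : ℤ} (x : A (n + 1)) : Δ n (d n x) = -d (n + 1) (Δ (n + 1) x) :=
  eq_neg_of_add_eq_zero_left (LinearMap.congr_fun (hdΔ n) x)

theorem Delta_d_eq_zero (hdΔ : ∀ n : ℤ, (Δ n).comp (d n) + (d (n + 1)).comp (Δ (n + 1)) = 0)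
    {n : ℤ} {x : A (n + 1 + 1)} (hx : Δ (n + 1 + 1) x = 0) : Δ (n + 1) (d (n + 1) x) = 0 := by
  rw [Delta_d_apply hdΔ, hx, map_zero, neg_zero]

theorem exists_d_Delta_eq_of_mem (hcond : dDeltaCondition K A d Δ) {n : ℤ} {y : A (n + 1)}
    (hd : d n y = 0) (hΔ : Δ (n + 1) y = 0)
    (hy : y ∈ range (d (n + 1)) ⊔ range (Δ n)) : ∃ z, d (n + 1) (Δ (n + 1) z) = y := by
  have hmem : y ∈ ker (d n) ⊓ ker (Δ (n + 1)) ⊓ (range (d (n + 1)) ⊔ range (Δ n)) :=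
    ⟨⟨hd, hΔ⟩, hy⟩
  rw [hcond n] at hmem
  exact hmem

theorem exists_d_Delta_eq_d (hd : ∀ n : ℤ, (d n).comp (d (n + 1)) = 0)
    (hdΔ : ∀ n : ℤ, (Δ n).comp (d n) + (d (n + 1)).comp (Δ (n + 1)) = 0)
    (hcond : dDeltaCondition K A d Δ) {n : ℤ} {x : A (n + 1 + 1)} (hx : Δ (n + 1 + 1) x = 0) :
    ∃ z, d (n + 1) (Δ (n + 1) z) = d (n + 1) x :=
  exists_d_Delta_eq_of_mem hcond (d_d_apply hd x) (Delta_d_eq_zero hdΔ hx)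
    (mem_sup_left (mem_range_self _ x))

theorem d_mem_range_Delta (hd : ∀ n : ℤ, (d n).comp (d (n + 1)) = 0)
    (hdΔ : ∀ n : ℤ, (Δ n).comp (d n) + (d (n + 1)).comp (Δ (n + 1)) = 0)
    (hcond : dDeltaCondition K A d Δ) {n : ℤ} {x : A (n + 1 + 1)} (hx : Δ (n + 1 + 1) x = 0) :
    d (n + 1) x ∈ range (Δ n) := by
  obtain ⟨z, hz⟩ := exists_d_Delta_eq_d hd hdΔ hcond hx
  exact ⟨-d n z, by rw [map_neg, Delta_d_apply hdΔ, neg_neg, hz]⟩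

theorem mem_map_d_ker_Delta (hΔ : ∀ n : ℤ, (Δ (n + 1)).comp (Δ n) = 0)
    (hcond : dDeltaCondition K A d Δ) {n : ℤ} {y : A (n + 1)} (hd : d n y = 0)
    (hΔy : Δ (n + 1) y = 0) (hy : y ∈ range (Δ n)) :
    y ∈ (ker (Δ (n + 1 + 1))).map (d (n + 1)) := by
  obtain ⟨z, hz⟩ := exists_d_Delta_eq_of_mem hcond hd hΔy (mem_sup_right hy)
  exact ⟨Δ (n + 1) z, Delta_Delta_apply hΔ z, hz⟩

theorem comap_map_d_ker_Delta_eq (hd : ∀ n : ℤ, (d n).comp (d (n + 1)) = 0)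
    (hΔ : ∀ n : ℤ, (Δ (n + 1)).comp (Δ n) = 0)
    (hdΔ : ∀ n : ℤ, (Δ n).comp (d n) + (d (n + 1)).comp (Δ (n + 1)) = 0)
    (hcond : dDeltaCondition K A d Δ) (n : ℤ) :
    ((ker (Δ (n + 1 + 1))).map (d (n + 1))).comap (ker (Δ (n + 1)) ⊓ ker (d n)).subtype =
      (range (Δ n)).comap (ker (Δ (n + 1)) ⊓ ker (d n)).subtype := by
  ext ⟨y, hΔy, hdy⟩
  simp only [mem_comap, subtype_apply]
  constructor
  · rintro ⟨x, hx, rfl⟩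
    exact d_mem_range_Delta hd hdΔ hcond hx
  · exact mem_map_d_ker_Delta hΔ hcond hdy hΔy

theorem exists_sub_Delta_mem_ker_inf_ker (hd : ∀ n : ℤ, (d n).comp (d (n + 1)) = 0)
    (hΔ : ∀ n : ℤ, (Δ (n + 1)).comp (Δ n) = 0)
    (hdΔ : ∀ n : ℤ, (Δ n).comp (d n) + (d (n + 1)).comp (Δ (n + 1)) = 0)
    (hcond : dDeltaCondition K A d Δ) {n : ℤ} {x : A (n + 1 + 1)} (hx : Δ (n + 1 + 1) x = 0) :
    ∃ z, x - Δ (n + 1) z ∈ ker (Δ (n + 1 + 1)) ⊓ ker (d (n + 1)) := by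
  obtain ⟨z, hz⟩ := exists_d_Delta_eq_d hd hdΔ hcond hx
  refine ⟨z, ?_, ?_⟩
  · rw [SetLike.mem_coe, mem_ker, map_sub, hx, Delta_Delta_apply hΔ, sub_zero]
  · rw [SetLike.mem_coe, mem_ker, map_sub, hz, sub_self]

end MixedComplex

open MixedComplex in
theorem kerDelta_to_DeltaHomology_quasiIso_general
    (K : Type*) [Field K] (A : ℤ → Type*)
    [∀ n, AddCommGroup (A n)] [∀ n, Module K (A n)]
    (d : ∀ n : ℤ, A (n + 1) →ₗ[K] A n) (Δ : ∀ n : ℤ, A n →ₗ[K] A (n + 1))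
    (hd : ∀ n : ℤ, (d n).comp (d (n + 1)) = 0)
    (hΔ : ∀ n : ℤ, (Δ (n + 1)).comp (Δ n) = 0)
    (hdΔ : ∀ n : ℤ, (Δ n).comp (d n) + (d (n + 1)).comp (Δ (n + 1)) = 0)
    (hcond : dDeltaCondition K A d Δ) :
    (∀ n : ℤ, ∀ x : A (n + 1 + 1), Δ (n + 1 + 1) x = 0 →
      d (n + 1) x ∈ LinearMap.range (Δ n) ⊓ LinearMap.ker (Δ (n + 1))) ∧
    (∀ n : ℤ,
      ∃ f : (↥(LinearMap.ker (Δ (n + 1)) ⊓ LinearMap.ker (d n)) ⧸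
              Submodule.comap (LinearMap.ker (Δ (n + 1)) ⊓ LinearMap.ker (d n)).subtype
                ((LinearMap.ker (Δ (n + 1 + 1))).map (d (n + 1)))) →ₗ[K]
            (↥(LinearMap.ker (Δ (n + 1))) ⧸
              Submodule.comap (LinearMap.ker (Δ (n + 1))).subtype
                (LinearMap.range (Δ n))),
        (∀ x : ↥(LinearMap.ker (Δ (n + 1)) ⊓ LinearMap.ker (d n)),
          f (Submodule.Quotient.mk x) =
            Submodule.Quotient.mk (Submodule.inclusion inf_le_left x)) ∧
        Function.Bijective f) := by
  refine ⟨fun n x hx => ⟨d_mem_range_Delta hd hdΔ hcond hx, Delta_d_eq_zero hdΔ hx⟩, fun n => ?_⟩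
  -- surjectivity uses the dΔ-condition one degree lower, so `n` is written as `m + 1`
  obtain ⟨m, rfl⟩ : ∃ m : ℤ, m + 1 = n := ⟨n - 1, sub_add_cancel n 1⟩
  set g := ((range (Δ (m + 1))).comap (ker (Δ (m + 1 + 1))).subtype).mkQ ∘ₗ
    inclusion (inf_le_left : ker (Δ (m + 1 + 1)) ⊓ ker (d (m + 1)) ≤ _)
  have hsurj : Function.Surjective g := by
    rintro ⟨⟨x, hx⟩⟩
    obtain ⟨z, hz⟩ := exists_sub_Delta_mem_ker_inf_ker hd hΔ hdΔ hcond hx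
    exact ⟨⟨_, hz⟩, (Submodule.Quotient.eq _).mpr ⟨-z, by simp⟩⟩
  refine ⟨_, fun _ => rfl, liftQ_bijective _ g ?_ hsurj⟩
  rw [ker_mkQ_comp_inclusion, comap_map_d_ker_Delta_eq hd hΔ hdΔ hcond]

/-- (Second arrow of the formality zig-zag.)  Let `A` be a mixed chain complex
satisfying the `dΔ`-condition.  Then `d (Ker Δ) ⊆ Im Δ ∩ Ker Δ`, so the
quotient map `Ker Δ → Ker Δ / Im Δ` is a chain map from `(Ker Δ, d)` to
`(Ker Δ / Im Δ, 0)`; moreover it is a quasi-isomorphism: in every degree, the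
induced map `(Ker Δ ∩ Ker d) / d(Ker Δ) → Ker Δ / Im Δ` is a linear
isomorphism. -/
theorem kerDelta_to_DeltaHomology_quasiIso
    (K : Type*) [Field K] [CharZero K] (A : ℤ → Type*)
    [∀ n, AddCommGroup (A n)] [∀ n, Module K (A n)]
    (d : ∀ n : ℤ, A (n + 1) →ₗ[K] A n) (Δ : ∀ n : ℤ, A n →ₗ[K] A (n + 1))
    (hd : ∀ n : ℤ, (d n).comp (d (n + 1)) = 0)
    (hΔ : ∀ n : ℤ, (Δ (n + 1)).comp (Δ n) = 0)
    (hdΔ : ∀ n : ℤ, (Δ n).comp (d n) + (d (n + 1)).comp (Δ (n + 1)) = 0)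
    (hcond : dDeltaCondition K A d Δ) :
    (∀ n : ℤ, ∀ x : A (n + 1 + 1), Δ (n + 1 + 1) x = 0 →
      d (n + 1) x ∈ LinearMap.range (Δ n) ⊓ LinearMap.ker (Δ (n + 1))) ∧
    (∀ n : ℤ,
      ∃ f : (↥(LinearMap.ker (Δ (n + 1)) ⊓ LinearMap.ker (d n)) ⧸
              Submodule.comap (LinearMap.ker (Δ (n + 1)) ⊓ LinearMap.ker (d n)).subtype
                ((LinearMap.ker (Δ (n + 1 + 1))).map (d (n + 1)))) →ₗ[K]
            (↥(LinearMap.ker (Δ (n + 1))) ⧸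
              Submodule.comap (LinearMap.ker (Δ (n + 1))).subtype
                (LinearMap.range (Δ n))),
        (∀ x : ↥(LinearMap.ker (Δ (n + 1)) ⊓ LinearMap.ker (d n)),
          f (Submodule.Quotient.mk x) =
            Submodule.Quotient.mk (Submodule.inclusion inf_le_left x)) ∧
        Function.Bijective f) :=
  kerDelta_to_DeltaHomology_quasiIso_general K A d Δ hd hΔ hdΔ hcond
end

section
/- If a mixed chain complex A satisfies the dΔ-condition, then its d-homology and its Δ-homology are isomorphic as graded vector spaces: for every n there is a linear isomorphism Ker d_n / d(A_{n+1}) ≅ Ker Δ_n / Δ(A_{n−1}). -/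
/-- A mixed chain complex over `K` is a `ℤ`-graded `K`-vector space `A` with
maps `d` of degree `−1` and `Δ` of degree `+1` such that `d ∘ d = 0`,
`Δ ∘ Δ = 0`, and `d ∘ Δ + Δ ∘ d = 0`.  Degrees are indexed so that
`d n : A (n+1) →ₗ A n` and `Δ n : A n →ₗ A (n+1)`.

The `dΔ`-condition: in every degree,
`Ker d ∩ Ker Δ ∩ (Im d + Im Δ) = Im (d ∘ Δ)`. -/

theorem dDelta_key {K : Type*} [Field K] {T U V W X : Type*}
    [AddCommGroup T] [Module K T] [AddCommGroup U] [Module K U]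
    [AddCommGroup V] [Module K V] [AddCommGroup W] [Module K W]
    [AddCommGroup X] [Module K X]
    (d0 : U →ₗ[K] T) (d1 : V →ₗ[K] U) (d2 : W →ₗ[K] V) (d3 : X →ₗ[K] W)
    (Δ1 : U →ₗ[K] V) (Δ2 : V →ₗ[K] W) (Δ3 : W →ₗ[K] X)
    (hd01 : ∀ v, d0 (d1 v) = 0) (hd12 : ∀ w, d1 (d2 w) = 0)
    (hΔ21 : ∀ u, Δ2 (Δ1 u) = 0) (hΔ32 : ∀ v, Δ3 (Δ2 v) = 0)
    (hdΔ1 : ∀ v, Δ1 (d1 v) + d2 (Δ2 v) = 0)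
    (hdΔ2 : ∀ w, Δ2 (d2 w) + d3 (Δ3 w) = 0)
    (condA : ∀ x : U, d0 x = 0 → Δ1 x = 0 → (∃ v, d1 v = x) → ∃ z, d1 (Δ1 z) = x)
    (condB1 : ∀ y : V, d1 y = 0 → Δ2 y = 0 → (∃ w, d2 w = y) → ∃ z, d2 (Δ2 z) = y)
    (condB2 : ∀ y : V, d1 y = 0 → Δ2 y = 0 → (∃ u, Δ1 u = y) → ∃ z, d2 (Δ2 z) = y)
    (condC : ∀ w : W, d2 w = 0 → Δ3 w = 0 → (∃ v, Δ2 v = w) → ∃ z, d3 (Δ3 z) = w) :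
    Nonempty ((↥(LinearMap.ker d1) ⧸
        Submodule.comap (LinearMap.ker d1).subtype (LinearMap.range d2)) ≃ₗ[K]
      (↥(LinearMap.ker Δ2) ⧸
        Submodule.comap (LinearMap.ker Δ2).subtype (LinearMap.range Δ1))) := by
  set S : Submodule K V := LinearMap.ker d1 ⊓ LinearMap.ker Δ2 with hS
  have hSd : S ≤ LinearMap.ker d1 := inf_le_left
  have hSΔ : S ≤ LinearMap.ker Δ2 := inf_le_right
  set pd := Submodule.comap (LinearMap.ker d1).subtype (LinearMap.range d2) with hpd
  set pΔ := Submodule.comap (LinearMap.ker Δ2).subtype (LinearMap.range Δ1) with hpΔ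
  set fd : ↥S →ₗ[K] (↥(LinearMap.ker d1) ⧸ pd) := pd.mkQ ∘ₗ Submodule.inclusion hSd with hfd
  set fΔ : ↥S →ₗ[K] (↥(LinearMap.ker Δ2) ⧸ pΔ) := pΔ.mkQ ∘ₗ Submodule.inclusion hSΔ with hfΔ
  -- surjectivity of fd
  have hfd_surj : Function.Surjective fd := by
    intro q
    obtain ⟨x, rfl⟩ := Submodule.Quotient.mk_surjective _ q
    have hx1 : d1 (x : V) = 0 := x.2
    have h1 : d2 (Δ2 (x : V)) = 0 := by
      have := hdΔ1 (x : V); rw [hx1, map_zero, zero_add] at this; exact this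
    obtain ⟨z, hz⟩ := condC (Δ2 (x : V)) h1 (hΔ32 _) ⟨_, rfl⟩
    have hmem : (x : V) + d2 z ∈ S := by
      constructor
      · simp [LinearMap.mem_ker, map_add, hx1, hd12]
      · have h2 : Δ2 (d2 z) = - d3 (Δ3 z) := eq_neg_of_add_eq_zero_left (hdΔ2 z)
        simp [LinearMap.mem_ker, map_add, h2, hz]
    refine ⟨⟨(x : V) + d2 z, hmem⟩, ?_⟩
    show pd.mkQ (Submodule.inclusion hSd _) = Submodule.Quotient.mk x
    rw [Submodule.mkQ_apply, Submodule.Quotient.eq]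
    refine ⟨z, ?_⟩
    simp [Submodule.inclusion, Submodule.subtype]
  -- surjectivity of fΔ
  have hfΔ_surj : Function.Surjective fΔ := by
    intro q
    obtain ⟨x, rfl⟩ := Submodule.Quotient.mk_surjective _ q
    have hx1 : Δ2 (x : V) = 0 := x.2
    have h1 : Δ1 (d1 (x : V)) = 0 := by
      have := hdΔ1 (x : V); rw [hx1, map_zero, add_zero] at this; exact this
    obtain ⟨z, hz⟩ := condA (d1 (x : V)) (hd01 _) h1 ⟨_, rfl⟩
    have hmem : (x : V) - Δ1 z ∈ S := by
      constructor
      · simp [LinearMap.mem_ker, map_sub, hz]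
      · simp [LinearMap.mem_ker, map_sub, hx1, hΔ21]
    refine ⟨⟨(x : V) - Δ1 z, hmem⟩, ?_⟩
    show pΔ.mkQ (Submodule.inclusion hSΔ _) = Submodule.Quotient.mk x
    rw [Submodule.mkQ_apply, Submodule.Quotient.eq]
    refine ⟨-z, ?_⟩
    simp [Submodule.inclusion, Submodule.subtype]
  -- kernels agree
  have hker : LinearMap.ker fd = LinearMap.ker fΔ := by
    ext x
    have hx1 : d1 (x : V) = 0 := x.2.1
    have hx2 : Δ2 (x : V) = 0 := x.2.2
    have hmkd : fd x = 0 ↔ (x : V) ∈ LinearMap.range d2 := by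
      rw [hfd]
      simp [Submodule.Quotient.mk_eq_zero, hpd, Submodule.inclusion, Submodule.subtype]
    have hmkΔ : fΔ x = 0 ↔ (x : V) ∈ LinearMap.range Δ1 := by
      rw [hfΔ]
      simp [Submodule.Quotient.mk_eq_zero, hpΔ, Submodule.inclusion, Submodule.subtype]
    simp only [LinearMap.mem_ker, hmkd, hmkΔ]
    constructor
    · rintro ⟨w, hw⟩
      obtain ⟨z, hz⟩ := condB1 (x : V) hx1 hx2 ⟨w, hw⟩
      have : Δ1 (d1 z) = - d2 (Δ2 z) := eq_neg_of_add_eq_zero_left (hdΔ1 z)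
      exact ⟨-(d1 z), by rw [map_neg, this, hz, neg_neg]⟩
    · rintro ⟨u, hu⟩
      obtain ⟨z, hz⟩ := condB2 (x : V) hx1 hx2 ⟨u, hu⟩
      exact ⟨Δ2 z, hz⟩
  exact ⟨((fd.quotKerEquivOfSurjective hfd_surj).symm.trans
    (Submodule.quotEquivOfEq _ _ hker)).trans (fΔ.quotKerEquivOfSurjective hfΔ_surj)⟩

/-- If a mixed chain complex `A` satisfies the `dΔ`-condition, then its
`d`-homology and its `Δ`-homology are isomorphic as graded vector spaces: in
every degree there is a linear isomorphism `Ker d / Im d ≅ Ker Δ / Im Δ`. -/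
theorem dHomology_iso_DeltaHomology
    (K : Type*) [Field K] [CharZero K] (A : ℤ → Type*)
    [∀ n, AddCommGroup (A n)] [∀ n, Module K (A n)]
    (d : ∀ n : ℤ, A (n + 1) →ₗ[K] A n) (Δ : ∀ n : ℤ, A n →ₗ[K] A (n + 1))
    (hd : ∀ n : ℤ, (d n).comp (d (n + 1)) = 0)
    (hΔ : ∀ n : ℤ, (Δ (n + 1)).comp (Δ n) = 0)
    (hdΔ : ∀ n : ℤ, (Δ n).comp (d n) + (d (n + 1)).comp (Δ (n + 1)) = 0)
    (hcond : dDeltaCondition K A d Δ) :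
    ∀ n : ℤ,
      Nonempty
        ((↥(LinearMap.ker (d n)) ⧸
            Submodule.comap (LinearMap.ker (d n)).subtype
              (LinearMap.range (d (n + 1)))) ≃ₗ[K]
         (↥(LinearMap.ker (Δ (n + 1))) ⧸
            Submodule.comap (LinearMap.ker (Δ (n + 1))).subtype
              (LinearMap.range (Δ n)))) := by
  intro n
  obtain ⟨m, rfl⟩ : ∃ m, n = m + 1 := ⟨n - 1, by omega⟩
  have conv : ∀ k : ℤ, ∀ x : A (k + 1),
      d k x = 0 → Δ (k + 1) x = 0 → x ∈ LinearMap.range (d (k + 1)) ⊔ LinearMap.range (Δ k) →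
      ∃ z, d (k + 1) (Δ (k + 1) z) = x := by
    intro k x h1 h2 h3
    have : x ∈ LinearMap.range ((d (k + 1)).comp (Δ (k + 1))) := by
      rw [← hcond k]
      exact ⟨⟨h1, h2⟩, h3⟩
    obtain ⟨z, hz⟩ := this
    exact ⟨z, hz⟩
  refine dDelta_key (d m) (d (m + 1)) (d (m + 1 + 1)) (d (m + 1 + 1 + 1))
    (Δ (m + 1)) (Δ (m + 1 + 1)) (Δ (m + 1 + 1 + 1))
    (fun v => LinearMap.congr_fun (hd m) v)
    (fun w => LinearMap.congr_fun (hd (m + 1)) w)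
    (fun u => LinearMap.congr_fun (hΔ (m + 1)) u)
    (fun v => LinearMap.congr_fun (hΔ (m + 1 + 1)) v)
    (fun v => LinearMap.congr_fun (hdΔ (m + 1)) v)
    (fun w => LinearMap.congr_fun (hdΔ (m + 1 + 1)) w)
    (fun x h1 h2 h3 => conv m x h1 h2
      (Submodule.mem_sup_left (by obtain ⟨v, hv⟩ := h3; exact ⟨v, hv⟩)))
    (fun y h1 h2 h3 => conv (m + 1) y h1 h2
      (Submodule.mem_sup_left (by obtain ⟨w, hw⟩ := h3; exact ⟨w, hw⟩)))
    (fun y h1 h2 h3 => conv (m + 1) y h1 h2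
      (Submodule.mem_sup_right (by obtain ⟨u, hu⟩ := h3; exact ⟨u, hu⟩)))
    (fun w h1 h2 h3 => conv (m + 1 + 1) w h1 h2
      (Submodule.mem_sup_right (by obtain ⟨v, hv⟩ := h3; exact ⟨v, hv⟩)))
end
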